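/- arXiv:1002.4318 — 6 statements merged into one kernel-verified Lean document; each statement's English description precedes it below -/
import Mathlib

section
/- If f ∈ F[V] is isobaric of weight λ and the stabilizer of f in P is trivial (i.e., σ_c(f) = f holds only for c = 0, so the orbit of f under P has size q), then the orbit product ∏_{c∈F_q} σ_c(f) is isobaric of weight λ. -/
open MvPolynomial
open scoped Classical

/-- The algebra automorphism of `F[a0,a1,a2]` induced by the upper-triangular matrix `σ_c`:
`a0 ↦ a0`, `a1 ↦ a1 + c·a0`, `a2 ↦ a2 + 2c·a1 + c²·a0`.  Here `a_i = X i`. -/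
noncomputable def σP (F : Type*) [Field F] (c : F) :
    MvPolynomial (Fin 3) F →ₐ[F] MvPolynomial (Fin 3) F :=
  aeval ![X 0, X 1 + C c * X 0, X 2 + C (2 * c) * X 1 + C (c ^ 2) * X 0]

/-- The algebra automorphism of `F[a0,a1,a2]` induced by `τ`: `a0 ↦ a2`, `a1 ↦ -a1`, `a2 ↦ a0`. -/
noncomputable def τA (F : Type*) [Field F] :
    MvPolynomial (Fin 3) F →ₐ[F] MvPolynomial (Fin 3) F :=
  aeval ![X 2, -X 1, X 0]

noncomputable def sT (F : Type*) [Field F] (t : F) :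
    MvPolynomial (Fin 3) F →ₐ[F] MvPolynomial (Fin 3) F :=
  aeval ![X 0, C t * X 1, C (t ^ 2) * X 2]

lemma sT_monomial (F : Type*) [Field F] (t : F) (m : Fin 3 →₀ ℕ) (a : F) :
    sT F t (monomial m a) = monomial m (t ^ (m 1 + 2 * m 2) * a) := by
  rw [monomial_eq, monomial_eq]
  rw [Finsupp.prod_fintype _ _ (fun i => pow_zero _)]
  rw [Fin.prod_univ_three]
  simp only [sT, map_mul, map_pow, aeval_X, aeval_C, Matrix.cons_val_zero,
    Matrix.cons_val_one, Matrix.head_cons, Matrix.cons_val_two, Matrix.tail_cons,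
    algebraMap_eq]
  rw [pow_add, pow_mul]
  ring

lemma coeff_sT (F : Type*) [Field F] (t : F) (f : MvPolynomial (Fin 3) F) (m : Fin 3 →₀ ℕ) :
    coeff m (sT F t f) = t ^ (m 1 + 2 * m 2) * coeff m f := by
  conv_lhs => rw [f.as_sum, map_sum]
  simp_rw [sT_monomial]
  rw [coeff_sum]
  simp only [coeff_monomial, Finset.sum_ite_eq']
  by_cases hm : m ∈ f.support
  · simp [hm]
  · simp [hm, MvPolynomial.notMem_support_iff.mp hm]

lemma sT_sigma (F : Type*) [Field F] (t c : F) (f : MvPolynomial (Fin 3) F) :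
    sT F t (σP F (t * c) f) = σP F c (sT F t f) := by
  have h : (sT F t).comp (σP F (t * c)) = (σP F c).comp (sT F t) := by
    apply MvPolynomial.algHom_ext
    intro i
    fin_cases i <;>
      simp [sT, σP, Matrix.cons_val_zero, Matrix.cons_val_one, Matrix.head_cons,
        mul_pow, C_mul, C_pow] <;> ring
  exact DFunLike.congr_fun h f

lemma sT_isobaric (F : Type*) [Field F] {q : ℕ} (t : F) (ht : t ^ (q - 1) = 1)
    [NeZero (q - 1)] (f : MvPolynomial (Fin 3) F) (lam : ZMod (q - 1))
    (hiso : ∀ m ∈ f.support, ((m 1 + 2 * m 2 : ℕ) : ZMod (q - 1)) = lam) :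
    sT F t f = C (t ^ lam.val) * f := by
  have key : ∀ a : ℕ, t ^ a = t ^ (a % (q - 1)) := by
    intro a
    conv_lhs => rw [← Nat.div_add_mod a (q - 1)]
    rw [pow_add, pow_mul, ht, one_pow, one_mul]
  ext m
  rw [coeff_sT, coeff_C_mul]
  by_cases hm : m ∈ f.support
  · congr 1
    have h := hiso m hm
    have h2 : ((m 1 + 2 * m 2 : ℕ) : ZMod (q - 1)) = ((lam.val : ℕ) : ZMod (q - 1)) := by
      rw [h, ZMod.natCast_val, ZMod.cast_id]
    have h3 : (m 1 + 2 * m 2) % (q - 1) = lam.val % (q - 1) :=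
      (ZMod.natCast_eq_natCast_iff _ _ _).mp h2
    rw [key, key lam.val, h3]
  · simp [MvPolynomial.notMem_support_iff.mp hm]

/-- If `f ∈ F[V]` is isobaric of weight `λ` (mod `q−1`) and has trivial stabiliser in `P`,
then the orbit product `∏_{c ∈ F_q} σ_c(f)` is isobaric of weight `λ`. -/
theorem orbit_product_isobaric (F : Type*) [Field F] (p n q : ℕ) (hp : p.Prime) (hp2 : p ≠ 2)
    [CharP F p] (hn : n ≠ 0) (hq : q = p ^ n)
    (Fq : Type*) [Field Fq] [Fintype Fq] [Algebra Fq F] (hcard : Fintype.card Fq = q)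
    (f : MvPolynomial (Fin 3) F) (lam : ZMod (q - 1))
    (hiso : ∀ m ∈ f.support, ((m 1 + 2 * m 2 : ℕ) : ZMod (q - 1)) = lam)
    (hstab : ∀ c : Fq, σP F (algebraMap Fq F c) f = f → c = 0) :
    ∀ m ∈ (∏ c : Fq, σP F (algebraMap Fq F c) f).support,
      ((m 1 + 2 * m 2 : ℕ) : ZMod (q - 1)) = lam := by
  intro m hm
  have hq1 : 1 < q := by
    rw [hq]; exact Nat.one_lt_pow hn hp.one_lt
  haveI : NeZero (q - 1) := ⟨by omega⟩
  obtain ⟨g, hg⟩ := IsCyclic.exists_generator (α := Fqˣ)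
  have hord : orderOf g = q - 1 := by
    rw [orderOf_eq_card_of_forall_mem_zpowers hg, Nat.card_eq_fintype_card, Fintype.card_units, hcard]
  set u : Fq := (g : Fq) with hu
  have hu0 : u ≠ 0 := g.ne_zero
  set t : F := algebraMap Fq F u with htdef
  have ht1 : t ^ (q - 1) = 1 := by
    have : u ^ (q - 1) = 1 := by
      rw [hu, ← Units.val_pow_eq_pow_val, ← hord, pow_orderOf_eq_one g, Units.val_one]
    rw [htdef, ← map_pow, this, map_one]
  set Pi : MvPolynomial (Fin 3) F := ∏ c : Fq, σP F (algebraMap Fq F c) f with hPi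
  set L : ℕ := lam.val with hL
  -- key identity
  have hfscale : sT F t f = C (t ^ L) * f := sT_isobaric F t ht1 f lam hiso
  have hstep : ∀ c : Fq, sT F t (σP F (algebraMap Fq F c) f)
      = C (t ^ L) * σP F (algebraMap Fq F (u⁻¹ * c)) f := by
    intro c
    have hc : algebraMap Fq F c = t * algebraMap Fq F (u⁻¹ * c) := by
      rw [htdef, ← map_mul, ← mul_assoc, mul_inv_cancel₀ hu0, one_mul]
    rw [hc, sT_sigma, hfscale, map_mul]
    congr 1
    simp [σP, aeval_C, algebraMap_eq]
  have hPi : sT F t Pi = C (t ^ L) * Pi := by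
    rw [hPi, map_prod]
    simp_rw [hstep]
    rw [Finset.prod_mul_distrib, Finset.prod_const, Finset.card_univ, hcard]
    have hre : ∏ c : Fq, σP F (algebraMap Fq F (u⁻¹ * c)) f
        = ∏ c : Fq, σP F (algebraMap Fq F c) f := by
      exact Fintype.prod_equiv (Equiv.mulLeft₀ u⁻¹ (inv_ne_zero hu0))
        _ _ (fun c => rfl)
    rw [hre, ← map_pow, ← pow_mul]
    have htq : t ^ q = t := by
      rw [htdef, ← map_pow, ← hcard, FiniteField.pow_card]
    have : t ^ (L * q) = t ^ L := by
      rw [mul_comm, pow_mul, htq]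
    rw [this]
  -- extract coefficient information
  have hcoeff : t ^ (m 1 + 2 * m 2) * coeff m Pi = t ^ L * coeff m Pi := by
    have := congrArg (coeff m) hPi
    rwa [coeff_sT, coeff_C_mul] at this
  have hne : coeff m Pi ≠ 0 := MvPolynomial.mem_support_iff.mp hm
  have htw : t ^ (m 1 + 2 * m 2) = t ^ L := mul_right_cancel₀ hne hcoeff
  have huw : u ^ (m 1 + 2 * m 2) = u ^ L := by
    apply (algebraMap Fq F).injective
    rw [map_pow, map_pow]; exact htw
  have hgw : g ^ (m 1 + 2 * m 2) = g ^ L := Units.ext (by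
    rw [Units.val_pow_eq_pow_val, Units.val_pow_eq_pow_val]; exact huw)
  have hmod : (m 1 + 2 * m 2) ≡ L [MOD q - 1] := by
    rw [← hord]
    exact (pow_eq_pow_iff_modEq).mp hgw
  calc ((m 1 + 2 * m 2 : ℕ) : ZMod (q - 1)) = ((L : ℕ) : ZMod (q - 1)) :=
        (ZMod.natCast_eq_natCast_iff _ _ _).mpr hmod
    _ = lam := by rw [hL, ZMod.natCast_val, ZMod.cast_id]
end

section
/- The polynomials a0, Δ, β and γ_0 satisfy the relation β² = a0^q·γ_0 + Δ·(Δ^{(q−1)/2} − a0^{q−1})² in F[V]. -/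
open Polynomial in
lemma aux_prod_X_sub_C (Fq : Type*) [Field Fq] [Fintype Fq] [DecidableEq Fq] :
    ∏ a : Fq, (X - C a) = X ^ (Fintype.card Fq) - X := by
  have h1 := FiniteField.roots_X_pow_card_sub_X Fq
  have hmon : (X ^ (Fintype.card Fq) - X : Fq[X]).Monic := by
    apply monic_X_pow_sub
    simpa using Fintype.one_lt_card
  have hdeg := FiniteField.X_pow_card_sub_X_natDegree_eq Fq (Fintype.one_lt_card (α := Fq))
  have := prod_multiset_X_sub_C_of_monic_of_roots_card_eq hmon (by rw [h1, hdeg]; simp)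
  rw [h1] at this
  rw [← this, Finset.prod_eq_multiset_prod]

open Polynomial in
lemma aux_prod_add (Fq K : Type*) [Field Fq] [Fintype Fq] [CommRing K]
    (f : Fq →+* K) (z : K) :
    ∏ c : Fq, (z + f c) = z ^ (Fintype.card Fq) - z := by
  classical
  have h := congrArg (Polynomial.eval₂RingHom f z) (aux_prod_X_sub_C Fq)
  simp only [map_prod, map_sub, map_pow, coe_eval₂RingHom, eval₂_X, eval₂_C] at h
  rw [← h]
  exact Fintype.prod_equiv (Equiv.neg Fq) _ _ (fun c => by simp [sub_eq_add_neg])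

lemma aux_prod_lin {Fq B : Type*} [Field Fq] [Fintype Fq] [CommRing B] [IsDomain B]
    (f : Fq →+* B) (t x : B) :
    ∏ c : Fq, (t + f c * x) = t ^ (Fintype.card Fq) - x ^ (Fintype.card Fq - 1) * t := by
  classical
  obtain ⟨q', hq'⟩ : ∃ q', Fintype.card Fq = q' + 1 :=
    ⟨Fintype.card Fq - 1, (Nat.succ_pred_eq_of_pos Fintype.card_pos).symm⟩
  rcases eq_or_ne x 0 with hx | hx
  · subst hx
    have hq1 : Fintype.card Fq - 1 ≠ 0 := by
      have := Fintype.one_lt_card (α := Fq); omega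
    simp [Finset.prod_const, zero_pow hq1]
  · set K := FractionRing B
    have hi : Function.Injective (algebraMap B K) := IsFractionRing.injective B K
    apply hi
    set i := algebraMap B K with hidef
    have hx' : i x ≠ 0 := fun h => hx (hi (by simpa using h))
    set z : K := i t / i x with hz
    have hzx : z * i x = i t := div_mul_cancel₀ _ hx'
    have key : ∀ c : Fq, i (t + f c * x) = (z + ((algebraMap B K).comp f) c) * i x := by
      intro c
      rw [map_add, map_mul, add_mul, hzx, RingHom.comp_apply]
    rw [map_prod, Finset.prod_congr rfl (fun c _ => key c), Finset.prod_mul_distrib,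
      Finset.prod_const, aux_prod_add Fq K _ z, map_sub, map_pow, map_mul, map_pow]
    rw [Finset.card_univ, hq', Nat.add_sub_cancel, ← hzx]
    ring

open MvPolynomial

/-- The relation `β² = a0^q·γ₀ + Δ·(Δ^((q−1)/2) − a0^(q−1))²` in `F[a0,a1,a2]`,
where `Δ = a1² − a0·a2`, `β = ∏_{c∈F_q}(a1 + c·a0)` and
`γ₀ = ∏_{c∈F_q}(a2 + 2c·a1 + c²·a0)`.  Here `a_i = X i`. -/
theorem beta_sq_relation (F : Type*) [Field F] (p n q : ℕ) (hp : p.Prime) (hp2 : p ≠ 2)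
    [CharP F p] (hn : n ≠ 0) (hq : q = p ^ n)
    (Fq : Type*) [Field Fq] [Fintype Fq] [Algebra Fq F] (hcard : Fintype.card Fq = q)
    (Δ β γ₀ : MvPolynomial (Fin 3) F)
    (hΔ : Δ = X 1 ^ 2 - X 0 * X 2)
    (hβ : β = ∏ c : Fq, (X 1 + C (algebraMap Fq F c) * X 0))
    (hγ : γ₀ = ∏ c : Fq,
      (X 2 + C (2 * algebraMap Fq F c) * X 1 + C ((algebraMap Fq F c) ^ 2) * X 0)) :
    β ^ 2 = X 0 ^ q * γ₀ + Δ * (Δ ^ ((q - 1) / 2) - X 0 ^ (q - 1)) ^ 2 := by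
  classical
  haveI : Fact p.Prime := ⟨hp⟩
  set m := (q - 1) / 2 with hm
  have hq1 : 1 < q := by rw [hq]; exact Nat.one_lt_pow hn hp.one_lt
  have hodd : Odd q := by rw [hq]; exact (hp.odd_of_ne_two hp2).pow
  have h2m : 2 * m = q - 1 := by
    rw [hm]; exact Nat.mul_div_cancel' (even_iff_two_dvd.mp (Nat.Odd.sub_odd hodd odd_one))
  have hq2m : q = 2 * m + 1 := by omega
  -- Step B : β = X1^q - X0^(q-1) * X1
  have hβ' : β = (X 1 : MvPolynomial (Fin 3) F) ^ q - (X 0) ^ (q - 1) * X 1 := by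
    rw [hβ, ← hcard]
    exact aux_prod_lin ((C : F →+* MvPolynomial (Fin 3) F).comp (algebraMap Fq F)) (X 1) (X 0)
  -- Step A : X0^q * γ₀ = ∏ ((X1 + c X0)^2 - Δ)
  have hA : (X 0 : MvPolynomial (Fin 3) F) ^ q * γ₀
      = ∏ c : Fq, ((X 1 + C (algebraMap Fq F c) * X 0) ^ 2 - Δ) := by
    rw [hγ, ← hcard, ← Finset.card_univ, ← Finset.prod_const, ← Finset.prod_mul_distrib]
    refine Finset.prod_congr rfl fun c _ => ?_
    rw [hΔ, map_mul, map_pow]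
    have h2 : (C (2 : F) : MvPolynomial (Fin 3) F) = 2 := map_ofNat _ 2
    rw [h2]
    ring
  -- the polynomial identity over R
  set F₁ : Polynomial (MvPolynomial (Fin 3) F) :=
    ∏ c : Fq, (Polynomial.C ((X 1 + C (algebraMap Fq F c) * X 0 : MvPolynomial (Fin 3) F) ^ 2)
      - Polynomial.X) with hF₁
  set G₁ : Polynomial (MvPolynomial (Fin 3) F) :=
    Polynomial.C (((X 1 : MvPolynomial (Fin 3) F) ^ q - (X 0) ^ (q - 1) * X 1) ^ 2)
      - Polynomial.X * (Polynomial.X ^ m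
          - Polynomial.C ((X 0 : MvPolynomial (Fin 3) F) ^ (q - 1))) ^ 2 with hG₁
  have hFG : F₁ = G₁ := by
    apply Polynomial.expand_injective (R := MvPolynomial (Fin 3) F) (n := 2) (by norm_num)
    rw [hF₁, hG₁]
    simp only [map_prod, map_sub, map_mul, map_pow, Polynomial.expand_C, Polynomial.expand_X]
    have hsplit : ∏ c : Fq, (Polynomial.C (X 1 + C (algebraMap Fq F c) * X 0
          : MvPolynomial (Fin 3) F) ^ 2
        - (Polynomial.X : Polynomial (MvPolynomial (Fin 3) F)) ^ 2)
        = (∏ c : Fq, (Polynomial.C (X 1 : MvPolynomial (Fin 3) F) - Polynomial.X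
              + (Polynomial.C.comp ((C : F →+* MvPolynomial (Fin 3) F).comp (algebraMap Fq F))) c
                * Polynomial.C (X 0 : MvPolynomial (Fin 3) F)))
          * ∏ c : Fq, (Polynomial.C (X 1 : MvPolynomial (Fin 3) F) + Polynomial.X
              + (Polynomial.C.comp ((C : F →+* MvPolynomial (Fin 3) F).comp (algebraMap Fq F))) c
                * Polynomial.C (X 0 : MvPolynomial (Fin 3) F)) := by
      rw [← Finset.prod_mul_distrib]
      refine Finset.prod_congr rfl fun c _ => ?_
      rw [map_add, map_mul, RingHom.comp_apply, RingHom.comp_apply]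
      ring
    rw [hsplit, ← hcard,
      aux_prod_lin (Polynomial.C.comp ((C : F →+* MvPolynomial (Fin 3) F).comp
        (algebraMap Fq F))) _ _,
      aux_prod_lin (Polynomial.C.comp ((C : F →+* MvPolynomial (Fin 3) F).comp
        (algebraMap Fq F))) _ _, hcard]
    have hsub : (Polynomial.C (X 1 : MvPolynomial (Fin 3) F) - Polynomial.X) ^ q
        = Polynomial.C (X 1 : MvPolynomial (Fin 3) F) ^ q - Polynomial.X ^ q := by
      rw [hq]; apply sub_pow_char_pow
    have hadd : (Polynomial.C (X 1 : MvPolynomial (Fin 3) F) + Polynomial.X) ^ q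
        = Polynomial.C (X 1 : MvPolynomial (Fin 3) F) ^ q + Polynomial.X ^ q := by
      rw [hq]; apply add_pow_char_pow
    have hbq : (Polynomial.X : Polynomial (MvPolynomial (Fin 3) F)) ^ q
        = Polynomial.X * ((Polynomial.X : Polynomial (MvPolynomial (Fin 3) F)) ^ 2) ^ m := by
      rw [← pow_mul, hq2m]; ring
    rw [hsub, hadd, hbq]
    ring
  -- evaluate at Δ
  have heval := congrArg (Polynomial.eval Δ) hFG
  rw [hF₁, hG₁, Polynomial.eval_prod] at heval
  simp only [Polynomial.eval_sub, Polynomial.eval_mul, Polynomial.eval_pow,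
    Polynomial.eval_C, Polynomial.eval_X] at heval
  rw [hβ', hA, heval]
  ring
end

section
/- Substituting a1 = 0 into γ_0 yields ∏_{c∈F_q}(a2 + c²·a0) = a2·((−a2)^{(q−1)/2} − a0^{(q−1)/2})² in the polynomial ring F[a0, a2]. -/
/-!
Both sides are polynomials over `F`, so it suffices to compare their values on an algebraic
closure `L`. There write `a0 = u²` and `a2 = -v²`; then `a2 + c²a0 = (v - cu)(-v - cu)`, and
`∏_c (v - cu) = v^q - u^(q-1) v` is the homogeneous form of `∏_c (T - c) = T^q - T`.
For odd `q = 2m + 1` the two factors combine to `-v²(v^(2m) - u^(2m))²`, the right-hand side.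
-/

open MvPolynomial

namespace FiniteField

variable {K : Type*} [Field K] [Fintype K]

theorem prod_univ_X_sub_C : ∏ c : K, (Polynomial.X - Polynomial.C c) =
    (Polynomial.X ^ Fintype.card K - Polynomial.X : Polynomial K) := by
  have hmonic : (Polynomial.X ^ Fintype.card K - Polynomial.X : Polynomial K).Monic :=
    Polynomial.monic_X_pow_sub (by rw [Polynomial.degree_X]; exact_mod_cast Fintype.one_lt_card)
  have := Polynomial.prod_multiset_X_sub_C_of_monic_of_roots_card_eq hmonic (by
    rw [roots_X_pow_card_sub_X, X_pow_card_sub_X_natDegree_eq K Fintype.one_lt_card]; rfl)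
  rwa [roots_X_pow_card_sub_X] at this

theorem prod_sub_ringHom {R : Type*} [CommRing R] (ψ : K →+* R) (v : R) :
    ∏ c : K, (v - ψ c) = v ^ Fintype.card K - v := by
  simpa [Polynomial.eval₂_finsetProd] using congrArg (Polynomial.eval₂ ψ v) prod_univ_X_sub_C

theorem prod_sub_ringHom_mul {L : Type*} [Field L] (ψ : K →+* L) (u v : L) :
    ∏ c : K, (v - ψ c * u) = v ^ Fintype.card K - u ^ (Fintype.card K - 1) * v := by
  obtain ⟨k, hk⟩ : ∃ k, Fintype.card K = k + 2 :=
    ⟨_, (Nat.sub_add_cancel Fintype.one_lt_card).symm⟩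
  rw [hk, show k + 2 - 1 = k + 1 from rfl]
  rcases eq_or_ne u 0 with rfl | hu
  · simp [hk]
  · calc ∏ c : K, (v - ψ c * u) = ∏ c : K, u * (v / u - ψ c) := by
          refine Finset.prod_congr rfl fun c _ => ?_
          field_simp
      _ = u ^ (k + 2) * ((v / u) ^ (k + 2) - v / u) := by
          rw [Finset.prod_mul_distrib, prod_sub_ringHom, Finset.prod_const, Finset.card_univ, hk]
      _ = _ := by
          rw [div_pow]; field_simp; ring

theorem prod_add_sq_mul {L : Type*} [Field L] [IsAlgClosed L] {m : ℕ}
    (hm : Fintype.card K = 2 * m + 1) (ψ : K →+* L) (x y : L) :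
    ∏ c : K, (y + ψ c ^ 2 * x) = y * ((-y) ^ m - x ^ m) ^ 2 := by
  obtain ⟨u, rfl⟩ := IsAlgClosed.exists_pow_nat_eq x two_pos
  obtain ⟨v, hv⟩ := IsAlgClosed.exists_pow_nat_eq (-y) two_pos
  obtain rfl : y = -v ^ 2 := by rw [hv, neg_neg]
  calc ∏ c : K, (-v ^ 2 + ψ c ^ 2 * u ^ 2) =
        (∏ c : K, (v - ψ c * u)) * ∏ c : K, (-v - ψ c * u) := by
        rw [← Finset.prod_mul_distrib]
        refine Finset.prod_congr rfl fun c _ => by ring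
    _ = _ := by
        rw [prod_sub_ringHom_mul, prod_sub_ringHom_mul, hm, (odd_two_mul_add_one m).neg_pow]
        simp only [add_tsub_cancel_right, neg_neg]
        ring

end FiniteField

theorem gamma_zero_at_a1_eq_zero_general (F : Type*) [Field F] (p n q : ℕ) (hp : p.Prime) (hp2 : p ≠ 2)
    (hq : q = p ^ n)
    (Fq : Type*) [Field Fq] [Fintype Fq] [Algebra Fq F] (hcard : Fintype.card Fq = q) :
    (∏ c : Fq, (X 1 + C ((algebraMap Fq F c) ^ 2) * X 0) : MvPolynomial (Fin 2) F) =
      X 1 * ((-X 1) ^ ((q - 1) / 2) - X 0 ^ ((q - 1) / 2)) ^ 2 := by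
  obtain ⟨m, hm⟩ : Odd q := hq ▸ (hp.odd_of_ne_two hp2).pow
  rw [show (q - 1) / 2 = m by omega]
  let L := AlgebraicClosure F
  apply MvPolynomial.map_injective _ (algebraMap F L).injective
  apply MvPolynomial.funext
  intro g
  simpa using FiniteField.prod_add_sq_mul (hcard.trans hm)
    ((algebraMap F L).comp (algebraMap Fq F)) (g 0) (g 1)

/-- Substituting `a1 = 0` into `γ₀` gives, in `F[a0, a2]` (with `a0 = X 0`, `a2 = X 1`):
`∏_{c∈F_q}(a2 + c²·a0) = a2·((−a2)^((q−1)/2) − a0^((q−1)/2))²`. -/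
theorem gamma_zero_at_a1_eq_zero (F : Type*) [Field F] (p n q : ℕ) (hp : p.Prime) (hp2 : p ≠ 2)
    [CharP F p] (hn : n ≠ 0) (hq : q = p ^ n)
    (Fq : Type*) [Field Fq] [Fintype Fq] [Algebra Fq F] (hcard : Fintype.card Fq = q) :
    (∏ c : Fq, (X 1 + C ((algebraMap Fq F c) ^ 2) * X 0) : MvPolynomial (Fin 2) F) =
      X 1 * ((-X 1) ^ ((q - 1) / 2) - X 0 ^ ((q - 1) / 2)) ^ 2 :=
  gamma_zero_at_a1_eq_zero_general F p n q hp hp2 hq Fq hcard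
end

section
/- If f ∈ F[V]^P and a1 divides f in F[V], then β divides f in F[V]. -/
open MvPolynomial
open scoped Classical

/-!
Applying `σ_c` to `a1 ∣ f` gives `a1 + c·a0 ∣ f` for every `c ∈ F_q`. These linear forms are
prime, being images of the prime `a1` under automorphisms, and pairwise non-associated, so
their product `β` divides `f`.
-/

section

variable {F : Type*} [Field F]

lemma σP_X_one (c : F) : σP F c (X 1) = X 1 + C c * X 0 := by
  simp [σP]

lemma σP_comp_σP_neg (c : F) : (σP F c).comp (σP F (-c)) = AlgHom.id F _ := by
  apply algHom_ext
  intro i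
  fin_cases i <;> simp [σP, map_ofNat]
  ring

noncomputable def σPEquiv (c : F) : MvPolynomial (Fin 3) F ≃ₐ[F] MvPolynomial (Fin 3) F :=
  AlgEquiv.ofAlgHom (σP F c) (σP F (-c)) (σP_comp_σP_neg c)
    (by simpa using σP_comp_σP_neg (-c))

lemma prime_X_one_add_C_mul_X_zero (c : F) :
    Prime (X 1 + C c * X 0 : MvPolynomial (Fin 3) F) := by
  rw [← σP_X_one]
  exact (MulEquiv.prime_iff (σPEquiv c).toMulEquiv).mpr X_prime

lemma X_one_add_C_mul_X_zero_not_dvd {c d : F} (hcd : c ≠ d) :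
    ¬ (X 1 + C c * X 0 : MvPolynomial (Fin 3) F) ∣ X 1 + C d * X 0 := by
  intro h
  have h_eval := map_dvd (eval ![1, -c, 0]) h
  simp only [map_add, map_mul, eval_X, eval_C, Matrix.cons_val_one,
    Matrix.cons_val_zero, mul_one, neg_add_cancel, zero_dvd_iff] at h_eval
  exact hcd (by linear_combination -h_eval)

lemma isRelPrime_X_one_add_C_mul_X_zero {c d : F} (hcd : c ≠ d) :
    IsRelPrime (X 1 + C c * X 0 : MvPolynomial (Fin 3) F) (X 1 + C d * X 0) :=
  (prime_X_one_add_C_mul_X_zero c).irreducible.isRelPrime_iff_not_dvd.mpr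
    (X_one_add_C_mul_X_zero_not_dvd hcd)

end

theorem beta_dvd_of_a1_dvd_general (F : Type*) [Field F]
    (Fq : Type*) [Field Fq] [Fintype Fq] [Algebra Fq F]
    (f : MvPolynomial (Fin 3) F)
    (hinv : ∀ c : Fq, σP F (algebraMap Fq F c) f = f)
    (hdvd : (X 1 : MvPolynomial (Fin 3) F) ∣ f) :
    (∏ c : Fq, (X 1 + C (algebraMap Fq F c) * X 0)) ∣ f := by
  refine Fintype.prod_dvd_of_isRelPrime
    (fun c d hcd ↦ isRelPrime_X_one_add_C_mul_X_zero ((algebraMap Fq F).injective.ne hcd))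
    fun c ↦ ?_
  simpa only [hinv c, σP_X_one] using map_dvd (σP F (algebraMap Fq F c)) hdvd

/-- If `f` is `P`-invariant and `a1` divides `f` in `F[V]`, then
`β = ∏_{c∈F_q}(a1 + c·a0)` divides `f` in `F[V]`. -/
theorem beta_dvd_of_a1_dvd (F : Type*) [Field F] (p n q : ℕ) (hp : p.Prime) (hp2 : p ≠ 2)
    [CharP F p] (hn : n ≠ 0) (hq : q = p ^ n)
    (Fq : Type*) [Field Fq] [Fintype Fq] [Algebra Fq F] (hcard : Fintype.card Fq = q)
    (f : MvPolynomial (Fin 3) F)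
    (hinv : ∀ c : Fq, σP F (algebraMap Fq F c) f = f)
    (hdvd : (X 1 : MvPolynomial (Fin 3) F) ∣ f) :
    (∏ c : Fq, (X 1 + C (algebraMap Fq F c) * X 0)) ∣ f :=
  beta_dvd_of_a1_dvd_general F Fq f hinv hdvd
end

section
/- The polynomials a0, Δ, β are algebraically independent over F, and the localization of R = F[a0, Δ, β, γ_0] at a0 satisfies R[a0^{−1}] = F[a0, a0^{−1}][Δ, β]; in particular γ_0 lies in the subring F[a0, a0^{−1}][Δ, β] of F[V][a0^{−1}]. -/
/-!
Over `𝔽_q` one has `∏_c (z + c t) = z^q - t^(q-1) z`, so `β = a₁^q - a₀^(q-1) a₁` and `a₁` is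
integral over `F[a₀, Δ, β]`; since `a₀ a₂ = a₁² - Δ`, also `a₂` is algebraic over it. Three
elements over which `F[a₀, a₁, a₂]` is algebraic are algebraically independent.

For `γ₀`, `a₀ (a₂ + 2c a₁ + c² a₀) = (a₁ + c a₀)² - Δ`. Factoring this over a square root `s`
of `Δ` and using the Frobenius gives `a₀^q γ₀ = β² - (s^q - a₀^(q-1) s)²`, a polynomial in
`a₀, Δ, β`; dividing by `a₀^q` puts `γ₀` into `F[a₀, a₀⁻¹][Δ, β]`.
-/

open Polynomial in
theorem FiniteField.prod_X_sub_C (K : Type*) [Field K] [Fintype K] :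
    ∏ a : K, (X - C a) = X ^ Fintype.card K - X := by
  have hmonic : (X ^ Fintype.card K - X : K[X]).Monic :=
    monic_X_pow_sub (by rw [degree_X]; exact_mod_cast Fintype.one_lt_card)
  have hcard : (X ^ Fintype.card K - X : K[X]).roots.card =
      (X ^ Fintype.card K - X : K[X]).natDegree := by
    rw [FiniteField.roots_X_pow_card_sub_X, X_pow_card_sub_X_natDegree_eq K Fintype.one_lt_card]
    rfl
  simpa [FiniteField.roots_X_pow_card_sub_X] using
    prod_multiset_X_sub_C_of_monic_of_roots_card_eq hmonic hcard

open MvPolynomial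

namespace FiniteField

variable {K A : Type*} [Field K] [Fintype K] [CommRing A] [Algebra K A]

local notation "q" => Fintype.card K

theorem prod_add_algebraMap (w : A) : ∏ c : K, (w + algebraMap K A c) = w ^ q - w :=
  calc ∏ c : K, (w + algebraMap K A c) = ∏ c : K, (w - algebraMap K A c) :=
        Fintype.prod_equiv (Equiv.neg K) _ _ fun c => by simp [sub_eq_add_neg]
    _ = w ^ q - w := by simpa using congrArg (Polynomial.aeval w) (prod_X_sub_C K)

variable [IsDomain A]

theorem prod_add_algebraMap_mul (z t : A) :
    ∏ c : K, (z + algebraMap K A c * t) = z ^ q - t ^ (q - 1) * z := by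
  apply IsFractionRing.injective A (FractionRing A)
  simp only [map_prod, map_add, map_mul, map_sub, map_pow, ← IsScalarTower.algebraMap_apply]
  generalize algebraMap A (FractionRing A) z = w, algebraMap A (FractionRing A) t = s
  obtain rfl | hs := eq_or_ne s 0
  · simp [zero_pow (Nat.sub_ne_zero_of_lt Fintype.one_lt_card)]
  calc ∏ c : K, (w + algebraMap K _ c * s) = ∏ c : K, (w / s + algebraMap K _ c) * s :=
        Finset.prod_congr rfl fun c _ => by field_simp
    _ = _ := by
      rw [Finset.prod_mul_distrib, prod_add_algebraMap, Finset.prod_const, Finset.card_univ,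
        sub_mul, div_pow, div_mul_cancel₀ _ (pow_ne_zero _ hs),
        ← pow_sub_one_mul Fintype.card_ne_zero s]
      field_simp

theorem prod_sq_add_algebraMap_mul_sub (hq : Odd q) (z t d : A) :
    ∏ c : K, ((z + algebraMap K A c * t) ^ 2 - d) =
      (z ^ q - t ^ (q - 1) * z) ^ 2 - d ^ q + 2 * t ^ (q - 1) * d ^ ((q + 1) / 2)
        - (t ^ (q - 1)) ^ 2 * d := by
  let Ω := AlgebraicClosure (FractionRing A)
  let f := (algebraMap (FractionRing A) Ω).comp (algebraMap A (FractionRing A))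
  have hf : Function.Injective f :=
    (algebraMap (FractionRing A) Ω).injective.comp (IsFractionRing.injective A _)
  have hfK (c : K) : f (algebraMap K A c) = algebraMap K Ω c := by
    simp only [f, RingHom.comp_apply, ← IsScalarTower.algebraMap_apply]
  obtain ⟨p, _, n, hp, hpn⟩ := FiniteField.card' K
  have : Fact p.Prime := ⟨hp⟩
  have : CharP Ω p := charP_of_injective_algebraMap (algebraMap K Ω).injective p
  obtain ⟨s, hs⟩ := IsAlgClosed.exists_pow_nat_eq (f d) two_pos
  have hfactor (c : K) : f ((z + algebraMap K A c * t) ^ 2 - d) =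
      (f z - s + algebraMap K Ω c * f t) * (f z + s + algebraMap K Ω c * f t) := by
    rw [map_sub, map_pow, map_add, map_mul, hfK, ← hs]
    ring
  apply hf
  rw [map_prod, Finset.prod_congr rfl fun c _ => hfactor c, Finset.prod_mul_distrib,
    prod_add_algebraMap_mul, prod_add_algebraMap_mul, hpn, sub_pow_char_pow, add_pow_char_pow,
    ← hpn]
  simp only [map_sub, map_add, map_mul, map_pow, map_ofNat, ← hs]
  obtain ⟨j, hj⟩ := hq
  rw [show q - 1 = 2 * j by omega, show (q + 1) / 2 = j + 1 by omega, hj]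
  ring

theorem pow_card_mul_prod_quadratic (hq : Odd q) (a₀ a₁ a₂ : A) :
    a₀ ^ q * ∏ c : K, (a₂ + 2 * algebraMap K A c * a₁ + algebraMap K A c ^ 2 * a₀) =
      (a₁ ^ q - a₀ ^ (q - 1) * a₁) ^ 2 - (a₁ ^ 2 - a₀ * a₂) ^ q
        + 2 * a₀ ^ (q - 1) * (a₁ ^ 2 - a₀ * a₂) ^ ((q + 1) / 2)
        - (a₀ ^ (q - 1)) ^ 2 * (a₁ ^ 2 - a₀ * a₂) := by
  rw [← prod_sq_add_algebraMap_mul_sub hq, ← Finset.card_univ, ← Finset.prod_const,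
    ← Finset.prod_mul_distrib]
  exact Finset.prod_congr rfl fun c _ => by ring

end FiniteField

namespace MvPolynomial

variable {K R σ : Type*} [Field K] [Fintype K] [CommRing R] [IsDomain R] [Algebra K R]

local notation "q" => Fintype.card K

theorem prod_X_add_C_mul_X (i j : σ) :
    ∏ c : K, (X i + C (algebraMap K R c) * X j) = X i ^ q - X j ^ (q - 1) * X i := by
  simpa [algebraMap_apply] using
    FiniteField.prod_add_algebraMap_mul (K := K) (X i : MvPolynomial σ R) (X j)

theorem X_pow_mul_prod_quadratic (hq : Odd q) (i j k : σ) :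
    X i ^ q * ∏ c : K,
        (X k + C (2 * algebraMap K R c) * X j + C (algebraMap K R c ^ 2) * X i) =
      (X j ^ q - X i ^ (q - 1) * X j) ^ 2 - (X j ^ 2 - X i * X k) ^ q
        + 2 * X i ^ (q - 1) * (X j ^ 2 - X i * X k) ^ ((q + 1) / 2)
        - (X i ^ (q - 1)) ^ 2 * (X j ^ 2 - X i * X k) := by
  simpa [algebraMap_apply, map_ofNat] using
    FiniteField.pow_card_mul_prod_quadratic (K := K) hq (X i : MvPolynomial σ R) (X j) (X k)

end MvPolynomial

section AlgebraicIndependence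

open Algebra

variable (R : Type*) [CommRing R] [IsDomain R] {q : ℕ}

theorem isAlgebraic_over_adjoin_X_zero_disc_pow_sub (hq : 1 < q) :
    Algebra.IsAlgebraic
      (adjoin R (Set.range ![(X 0 : MvPolynomial (Fin 3) R), X 1 ^ 2 - X 0 * X 2,
        X 1 ^ q - X 0 ^ (q - 1) * X 1]))
      (MvPolynomial (Fin 3) R) := by
  set f := ![(X 0 : MvPolynomial (Fin 3) R), X 1 ^ 2 - X 0 * X 2, X 1 ^ q - X 0 ^ (q - 1) * X 1]
  set S := adjoin R (Set.range f)
  let x (i : Fin 3) : S := ⟨f i, subset_adjoin (Set.mem_range_self i)⟩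
  have hf (i : Fin 3) : IsAlgebraic S (f i) := isAlgebraic_algebraMap (x i)
  have h0 : IsAlgebraic S (X 0 : MvPolynomial (Fin 3) R) := hf 0
  have h1 : IsAlgebraic S (X 1 : MvPolynomial (Fin 3) R) := by
    refine IsIntegral.isAlgebraic ⟨Polynomial.X ^ q
      - (Polynomial.C (x 0 ^ (q - 1)) * Polynomial.X + Polynomial.C (x 2)),
      Polynomial.monic_X_pow_sub ?_, ?_⟩
    · exact Polynomial.degree_linear_le.trans_lt (by exact_mod_cast hq)
    · simp [x, f]
  have h2 : IsAlgebraic S (X 2 : MvPolynomial (Fin 3) R) := by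
    refine h0.of_mul (mem_nonZeroDivisors_of_ne_zero (X_ne_zero 0)) ?_
    rw [show X 0 * X 2 = X 1 ^ 2 - f 1 by simp [f]]
    exact (h1.pow 2).sub (hf 1)
  have hX : ∀ i,
      X i ∈ (Subalgebra.algebraicClosure S (MvPolynomial (Fin 3) R)).restrictScalars R
    | 0 => h0
    | 1 => h1
    | 2 => h2
  have htop := eq_top_iff.2 <|
    (adjoin_range_X (R := R)).ge.trans (adjoin_le (Set.range_subset_iff.2 hX))
  exact ⟨fun a => htop.ge (mem_top : a ∈ ⊤)⟩

theorem algebraicIndependent_X_zero_disc_pow_sub (hq : 1 < q) :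
    AlgebraicIndependent R ![(X 0 : MvPolynomial (Fin 3) R), X 1 ^ 2 - X 0 * X 2,
      X 1 ^ q - X 0 ^ (q - 1) * X 1] :=
  have := isAlgebraic_over_adjoin_X_zero_disc_pow_sub R hq
  -- `by simp` uses `trdeg R (MvPolynomial (Fin 3) R) = 3`
  (IsAlgebraic.isTranscendenceBasis_of_lift_le_trdeg_of_finite R _ (by simp)).1

end AlgebraicIndependence

theorem IsLocalization.Away.algebraMap_mem_of_pow_mul_eq {R L : Type*} [CommRing R] [CommRing L]
    [Algebra R L] {x : R} [IsLocalization.Away x L] {S : Subring L}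
    (hinv : IsLocalization.Away.invSelf x ∈ S) {y z : R} {k : ℕ} (h : x ^ k * y = z)
    (hz : algebraMap R L z ∈ S) : algebraMap R L y ∈ S := by
  have hxy : algebraMap R L y = IsLocalization.Away.invSelf x ^ k * algebraMap R L z := by
    rw [← h, map_mul, map_pow, ← mul_assoc, ← mul_pow, mul_comm (invSelf x),
      IsLocalization.Away.mul_invSelf, one_pow, one_mul]
  exact hxy ▸ mul_mem (pow_mem hinv k) hz

theorem localization_at_a0_general (F : Type*) [Field F] (p n q : ℕ) (hp : p.Prime) (hp2 : p ≠ 2)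
    (hq : q = p ^ n)
    (Fq : Type*) [Field Fq] [Fintype Fq] [Algebra Fq F] (hcard : Fintype.card Fq = q)
    (Δ β γ₀ : MvPolynomial (Fin 3) F)
    (hΔ : Δ = X 1 ^ 2 - X 0 * X 2)
    (hβ : β = ∏ c : Fq, (X 1 + C (algebraMap Fq F c) * X 0))
    (hγ : γ₀ = ∏ c : Fq,
      (X 2 + C (2 * algebraMap Fq F c) * X 1 + C ((algebraMap Fq F c) ^ 2) * X 0)) :
    AlgebraicIndependent F ![(X 0 : MvPolynomial (Fin 3) F), Δ, β] ∧
    (let L := Localization.Away (X 0 : MvPolynomial (Fin 3) F)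
     let ι := algebraMap (MvPolynomial (Fin 3) F) L
     let u : L := IsLocalization.Away.invSelf (X 0 : MvPolynomial (Fin 3) F)
     let constants : Set L := Set.range (ι.comp (C : F →+* MvPolynomial (Fin 3) F))
     Subring.closure (constants ∪ {ι (X 0), u, ι Δ, ι β, ι γ₀}) =
       Subring.closure (constants ∪ {ι (X 0), u, ι Δ, ι β}) ∧
     ι γ₀ ∈ Subring.closure (constants ∪ {ι (X 0), u, ι Δ, ι β})) := by
  subst hcard
  have hodd : Odd (Fintype.card Fq) := hq ▸ (hp.odd_of_ne_two hp2).pow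
  have hβ' : β = X 1 ^ Fintype.card Fq - X 0 ^ (Fintype.card Fq - 1) * X 1 :=
    hβ ▸ prod_X_add_C_mul_X 1 0
  have hγ' : X 0 ^ Fintype.card Fq * γ₀ = β ^ 2 - Δ ^ Fintype.card Fq
      + 2 * X 0 ^ (Fintype.card Fq - 1) * Δ ^ ((Fintype.card Fq + 1) / 2)
      - (X 0 ^ (Fintype.card Fq - 1)) ^ 2 * Δ := by
    rw [hγ, hβ', hΔ]
    exact X_pow_mul_prod_quadratic hodd 0 1 2
  refine ⟨hΔ ▸ hβ' ▸ algebraicIndependent_X_zero_disc_pow_sub F Fintype.one_lt_card, ?_⟩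
  intro L ι u constants
  set S := Subring.closure (constants ∪ {ι (X 0), u, ι Δ, ι β})
  obtain ⟨hX0, hu, hΔS, hβS⟩ : ι (X 0) ∈ S ∧ u ∈ S ∧ ι Δ ∈ S ∧ ι β ∈ S := by
    have : {ι (X 0), u, ι Δ, ι β} ⊆ (S : Set L) :=
      fun a ha => Subring.subset_closure (Or.inr ha)
    simpa [Set.insert_subset_iff] using this
  have hγS : ι γ₀ ∈ S := by
    refine IsLocalization.Away.algebraMap_mem_of_pow_mul_eq hu hγ' ?_
    simp only [map_sub, map_add, map_mul, map_pow, map_ofNat]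
    exact sub_mem (add_mem (sub_mem (pow_mem hβS 2) (pow_mem hΔS _))
        (mul_mem (mul_mem (ofNat_mem S 2) (pow_mem hX0 _)) (pow_mem hΔS _)))
      (mul_mem (pow_mem (pow_mem hX0 _) 2) hΔS)
  refine ⟨Subring.closure_eq_of_le ?_ (Subring.closure_mono ?_), hγS⟩
  · exact Set.union_subset (fun a ha => Subring.subset_closure (Or.inl ha)) <|
      Set.insert_subset hX0 <| Set.insert_subset hu <| Set.insert_subset hΔS <|
        Set.insert_subset hβS <| Set.singleton_subset_iff.2 hγS
  · exact Set.union_subset_union_right _ <| Set.insert_subset_insert <|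
      Set.insert_subset_insert <| Set.insert_subset_insert <|
        Set.singleton_subset_iff.2 (Set.mem_insert _ _)

/-- `a0, Δ, β` are algebraically independent over `F`, and in the localization
`F[V][a0⁻¹]`, the subring `R[a0⁻¹]` generated by `F`, `a0`, `a0⁻¹`, `Δ`, `β`, `γ₀` coincides
with `F[a0, a0⁻¹][Δ, β]`; in particular `γ₀ ∈ F[a0, a0⁻¹][Δ, β]`. -/
theorem localization_at_a0 (F : Type*) [Field F] (p n q : ℕ) (hp : p.Prime) (hp2 : p ≠ 2)
    [CharP F p] (hn : n ≠ 0) (hq : q = p ^ n)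
    (Fq : Type*) [Field Fq] [Fintype Fq] [Algebra Fq F] (hcard : Fintype.card Fq = q)
    (Δ β γ₀ : MvPolynomial (Fin 3) F)
    (hΔ : Δ = X 1 ^ 2 - X 0 * X 2)
    (hβ : β = ∏ c : Fq, (X 1 + C (algebraMap Fq F c) * X 0))
    (hγ : γ₀ = ∏ c : Fq,
      (X 2 + C (2 * algebraMap Fq F c) * X 1 + C ((algebraMap Fq F c) ^ 2) * X 0)) :
    AlgebraicIndependent F ![(X 0 : MvPolynomial (Fin 3) F), Δ, β] ∧
    (let L := Localization.Away (X 0 : MvPolynomial (Fin 3) F)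
     let ι := algebraMap (MvPolynomial (Fin 3) F) L
     let u : L := IsLocalization.Away.invSelf (X 0 : MvPolynomial (Fin 3) F)
     let constants : Set L := Set.range (ι.comp (C : F →+* MvPolynomial (Fin 3) F))
     Subring.closure (constants ∪ {ι (X 0), u, ι Δ, ι β, ι γ₀}) =
       Subring.closure (constants ∪ {ι (X 0), u, ι Δ, ι β}) ∧
     ι γ₀ ∈ Subring.closure (constants ∪ {ι (X 0), u, ι Δ, ι β})) :=
  localization_at_a0_general F p n q hp hp2 hq Fq hcard Δ β γ₀ hΔ hβ hγ
end

section
/- The polynomial Γ = ∏_{k∈Q̄} γ_k is SL_2(F_q)-invariant: σ_c(Γ) = Γ for all c ∈ F_q and τ(Γ) = Γ. -/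
/-!
Write `ℓ(c, k) = a2 + 2c·a1 + (c² - k)·a0`, so that `Γ = ∏_{k ∈ Q̄, c ∈ F_q} ℓ(c, k)`.
Each `σ_a` maps `ℓ(c, k)` to `ℓ(c + a, k)`, which permutes the factors of every `γ_k`.
With `d = c² - k`, nonzero because `k` is a nonsquare, `τ` maps `ℓ(c, k)` to
`d · ℓ(-c/d, k/d²)`, and `(k, c) ↦ (k/d², -c/d)` is an involution of `Q̄ × F_q`; hence
`τ Γ = (∏_{k, c} (c² - k)) · Γ`. The scalar is `1`: substituting `k ↦ c²k` turns
`∏_k (c² - k)` into `c^{2|Q̄|} ∏_k (1 - k)` for `c ≠ 0`, and the remaining products are `1` by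
Fermat's little theorem and by pairing each element with its inverse.
-/

open MvPolynomial
open scoped Classical

open Finset

theorem isSquare_sq_mul_iff {K : Type*} [Field K] {u : K} (hu : u ≠ 0) (k : K) :
    IsSquare (u ^ 2 * k) ↔ IsSquare k :=
  ⟨fun h => by simpa [hu] using h.div (IsSquare.sq u), (IsSquare.sq u).mul⟩

section Nonsquares

variable {K : Type*} [Field K] [Fintype K]

variable (K) in
noncomputable def nonsquares : Finset K :=
  univ.filter fun k => k ≠ 0 ∧ ¬IsSquare k

theorem mem_nonsquares {k : K} : k ∈ nonsquares K ↔ ¬IsSquare k := by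
  simp only [nonsquares, mem_filter, mem_univ, true_and, and_iff_right_iff_imp]
  rintro h rfl
  exact h IsSquare.zero

theorem ne_zero_of_mem_nonsquares {k : K} (hk : k ∈ nonsquares K) : k ≠ 0 := by
  rintro rfl
  exact mem_nonsquares.1 hk IsSquare.zero

theorem sq_sub_ne_zero_of_mem_nonsquares {k : K} (hk : k ∈ nonsquares K) (c : K) :
    c ^ 2 - k ≠ 0 :=
  fun h => mem_nonsquares.1 hk ⟨c, by linear_combination -h⟩

theorem sq_mul_mem_nonsquares_iff {u : K} (hu : u ≠ 0) {k : K} :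
    u ^ 2 * k ∈ nonsquares K ↔ k ∈ nonsquares K := by
  simp only [mem_nonsquares, isSquare_sq_mul_iff hu]

theorem inv_mem_nonsquares {k : K} (hk : k ∈ nonsquares K) : k⁻¹ ∈ nonsquares K :=
  mem_nonsquares.2 (isSquare_inv.not.2 (mem_nonsquares.1 hk))

theorem prod_nonsquares_comp_sq_mul {M : Type*} [CommMonoid M] {u : K} (hu : u ≠ 0)
    (f : K → M) : ∏ k ∈ nonsquares K, f (u ^ 2 * k) = ∏ k ∈ nonsquares K, f k := by
  refine prod_nbij' (u ^ 2 * ·) (u⁻¹ ^ 2 * ·) (fun k hk => (sq_mul_mem_nonsquares_iff hu).2 hk)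
    (fun k hk => (sq_mul_mem_nonsquares_iff (inv_ne_zero hu)).2 hk) (fun k _ => ?_)
    (fun k _ => ?_) (fun _ _ => rfl) <;> field_simp

theorem prod_nonsquares_neg : ∏ k ∈ nonsquares K, -k = 1 := by
  refine prod_involution (fun k _ => k⁻¹) (fun k hk => ?_) (fun k hk hne heq => hne ?_)
    (fun k hk => inv_mem_nonsquares hk) (fun k _ => inv_inv k)
  · have := ne_zero_of_mem_nonsquares hk
    field_simp
  · have hkk : k * k = 1 := by rw [← inv_mul_cancel₀ (ne_zero_of_mem_nonsquares hk), heq]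
    rcases mul_self_eq_one_iff.1 hkk with rfl | rfl
    · exact absurd IsSquare.one (mem_nonsquares.1 hk)
    · exact neg_neg 1

theorem prod_erase_zero_sq : ∏ c ∈ univ.erase (0 : K), c ^ 2 = 1 := by
  refine prod_involution (fun c _ => c⁻¹) (fun c hc => ?_) (fun c hc hne heq => hne ?_)
    (fun c hc => mem_erase.2 ⟨inv_ne_zero (ne_of_mem_erase hc), mem_univ _⟩)
    (fun c _ => inv_inv c)
  · have := ne_of_mem_erase hc
    field_simp
  · rw [sq]
    nth_rw 1 [← heq]
    exact inv_mul_cancel₀ (ne_of_mem_erase hc)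

theorem prod_nonsquares_prod_sq_sub : ∏ k ∈ nonsquares K, ∏ c, (c ^ 2 - k) = 1 := by
  have hrow : ∀ c ∈ univ.erase (0 : K),
      ∏ k ∈ nonsquares K, (c ^ 2 - k) =
        (c ^ 2) ^ #(nonsquares K) * ∏ k ∈ nonsquares K, (1 - k) := by
    intro c hc
    rw [← prod_nonsquares_comp_sq_mul (ne_of_mem_erase hc), ← prod_const, ← prod_mul_distrib]
    exact prod_congr rfl fun k _ => by ring
  have hunit : ∏ k ∈ nonsquares K, (1 - k) ≠ 0 :=
    prod_ne_zero_iff.2 fun k hk => by simpa using sq_sub_ne_zero_of_mem_nonsquares hk 1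
  rw [prod_comm, ← mul_prod_erase univ _ (mem_univ 0), prod_congr rfl hrow, prod_mul_distrib,
    prod_pow, prod_erase_zero_sq, one_pow, prod_const, card_erase_of_mem (mem_univ 0), card_univ,
    FiniteField.pow_card_sub_one_eq_one _ hunit]
  simpa using prod_nonsquares_neg

end Nonsquares

section TauIndex

variable {K : Type*} [Field K]

noncomputable def tauIndex (x : K × K) : K × K :=
  (x.1 / (x.2 ^ 2 - x.1) ^ 2, -x.2 / (x.2 ^ 2 - x.1))

theorem tauIndex_disc (x : K × K) :
    (tauIndex x).2 ^ 2 - (tauIndex x).1 = (x.2 ^ 2 - x.1)⁻¹ := by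
  rw [tauIndex, neg_div, neg_sq, div_pow, ← sub_div, sq (x.2 ^ 2 - x.1), div_self_mul_self']

theorem tauIndex_tauIndex {x : K × K} (hx : x.2 ^ 2 - x.1 ≠ 0) : tauIndex (tauIndex x) = x := by
  rw [tauIndex, tauIndex_disc]
  ext <;> simp only [tauIndex] <;> field_simp

theorem tauIndex_mem [Fintype K] {x : K × K} (hx : x ∈ nonsquares K ×ˢ univ) :
    tauIndex x ∈ nonsquares K ×ˢ univ := by
  have hk := (mem_product.1 hx).1
  have hd := inv_ne_zero (sq_sub_ne_zero_of_mem_nonsquares hk x.2)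
  refine mem_product.2 ⟨?_, mem_univ _⟩
  rw [tauIndex, div_eq_inv_mul, ← inv_pow]
  exact (sq_mul_mem_nonsquares_iff hd).2 hk

end TauIndex

section Polynomials

variable (F : Type*) [Field F]

noncomputable def gammaFactor (b k : F) : MvPolynomial (Fin 3) F :=
  X 2 + C (2 * b) * X 1 + C (b ^ 2 - k) * X 0

theorem σP_gammaFactor (a b k : F) :
    σP F a (gammaFactor F b k) = gammaFactor F (b + a) k := by
  simp only [gammaFactor, σP, map_add, map_mul, aeval_X, aeval_C, algebraMap_eq,
    Matrix.cons_val_zero, Matrix.cons_val_one, Matrix.cons_val_two, Matrix.head_cons,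
    Matrix.tail_cons, map_sub, map_pow, map_ofNat]
  ring

theorem τA_gammaFactor {b k : F} (h : b ^ 2 - k ≠ 0) :
    τA F (gammaFactor F b k) =
      C (b ^ 2 - k) * gammaFactor F (-b / (b ^ 2 - k)) (k / (b ^ 2 - k) ^ 2) := by
  have h1 : (b ^ 2 - k) * (2 * (-b / (b ^ 2 - k))) = -(2 * b) := by field_simp
  have h2 : (b ^ 2 - k) * ((-b / (b ^ 2 - k)) ^ 2 - k / (b ^ 2 - k) ^ 2) = 1 := by
    field_simp
  rw [gammaFactor, gammaFactor, mul_add, mul_add, ← mul_assoc, ← mul_assoc, ← map_mul, ← map_mul,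
    h1, h2, map_neg, map_one]
  simp only [τA, map_add, map_mul, aeval_X, aeval_C, algebraMap_eq, Matrix.cons_val_zero,
    Matrix.cons_val_one, Matrix.cons_val_two, Matrix.head_cons, Matrix.tail_cons]
  ring

end Polynomials

section Gamma

variable (F : Type*) [Field F] (Fq : Type*) [Field Fq] [Fintype Fq] [Algebra Fq F]

noncomputable def Gamma : MvPolynomial (Fin 3) F :=
  ∏ k ∈ nonsquares Fq, ∏ c : Fq, gammaFactor F (algebraMap Fq F c) (algebraMap Fq F k)

theorem σP_Gamma (a : Fq) : σP F (algebraMap Fq F a) (Gamma F Fq) = Gamma F Fq := by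
  simp only [Gamma, map_prod, σP_gammaFactor, ← map_add]
  exact prod_congr rfl fun k _ => Equiv.prod_comp (Equiv.addRight a)
    fun c => gammaFactor F (algebraMap Fq F c) (algebraMap Fq F k)

theorem τA_Gamma : τA F (Gamma F Fq) = Gamma F Fq := by
  let G (x : Fq × Fq) := gammaFactor F (algebraMap Fq F x.2) (algebraMap Fq F x.1)
  have hτ : ∀ x ∈ nonsquares Fq ×ˢ univ,
      τA F (G x) = C (algebraMap Fq F (x.2 ^ 2 - x.1)) * G (tauIndex x) := by
    intro x hx
    have hd := sq_sub_ne_zero_of_mem_nonsquares (mem_product.1 hx).1 x.2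
    rw [← (map_ne_zero (algebraMap Fq F)), map_sub, map_pow] at hd
    rw [τA_gammaFactor F hd]
    simp only [G, tauIndex, map_sub (algebraMap Fq F), map_pow (algebraMap Fq F),
      map_div₀ (algebraMap Fq F), map_neg (algebraMap Fq F)]
  rw [Gamma, ← prod_product' (f := fun k c => G (k, c)), map_prod, prod_congr rfl hτ,
    prod_mul_distrib, ← map_prod, ← map_prod, prod_product' (f := fun k c => c ^ 2 - k),
    prod_nonsquares_prod_sq_sub, map_one, map_one, one_mul]
  have hinv : ∀ x ∈ nonsquares Fq ×ˢ univ, tauIndex (tauIndex x) = x := fun x hx =>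
    tauIndex_tauIndex (sq_sub_ne_zero_of_mem_nonsquares (mem_product.1 hx).1 x.2)
  exact prod_nbij' tauIndex tauIndex (fun x hx => tauIndex_mem hx) (fun x hx => tauIndex_mem hx)
    hinv hinv fun _ _ => rfl

end Gamma

theorem Gamma_invariant_general (F : Type*) [Field F]
    (Fq : Type*) [Field Fq] [Fintype Fq] [Algebra Fq F]
    (Γ : MvPolynomial (Fin 3) F)
    (hΓ : Γ = ∏ k ∈ Finset.univ.filter (fun k : Fq => k ≠ 0 ∧ ¬ IsSquare k),
      ∏ c : Fq, (X 2 + C (2 * algebraMap Fq F c) * X 1 +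
        C ((algebraMap Fq F c) ^ 2 - algebraMap Fq F k) * X 0)) :
    (∀ c : Fq, σP F (algebraMap Fq F c) Γ = Γ) ∧ τA F Γ = Γ := by
  change Γ = Gamma F Fq at hΓ
  subst hΓ
  exact ⟨σP_Gamma F Fq, τA_Gamma F Fq⟩

/-- `Γ = ∏_{k ∈ Q̄} γ_k` (product over the quadratic nonresidues of `F_q`) is
`SL₂(F_q)`-invariant: it is fixed by every `σ_c` and by `τ`. -/
theorem Gamma_invariant (F : Type*) [Field F] (p n q : ℕ) (hp : p.Prime) (hp2 : p ≠ 2)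
    [CharP F p] (hn : n ≠ 0) (hq : q = p ^ n)
    (Fq : Type*) [Field Fq] [Fintype Fq] [Algebra Fq F] (hcard : Fintype.card Fq = q)
    (Γ : MvPolynomial (Fin 3) F)
    (hΓ : Γ = ∏ k ∈ Finset.univ.filter (fun k : Fq => k ≠ 0 ∧ ¬ IsSquare k),
      ∏ c : Fq, (X 2 + C (2 * algebraMap Fq F c) * X 1 +
        C ((algebraMap Fq F c) ^ 2 - algebraMap Fq F k) * X 0)) :
    (∀ c : Fq, σP F (algebraMap Fq F c) Γ = Γ) ∧ τA F Γ = Γ :=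
  Gamma_invariant_general F Fq Γ hΓ
end
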